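/- Let R be a commutative ring with 2 invertible, let f_0, f_1 ∈ GL_{2n}(R) be invertible skew-symmetric matrices, and let g, h ∈ GL_{2n}(R). Then (gᵗf_1g) ⊥ σ_{2n}(gᵗf_0g)^{-1}σ_{2n} ∼ (hᵗf_1h) ⊥ σ_{2n}(hᵗf_0h)^{-1}σ_{2n}; in other words, the class of (gᵗf_1g) ⊥ σ_{2n}(gᵗf_0g)^{-1}σ_{2n} under the relation ∼ does not depend on the choice of g. -/

import Mathlib

open Matrix Polynomial

/-- Membership in the subgroup `E_n(R)` of `GL_n(R)` generated by the elementary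
matrices `1 + r·e_{ij}` (`r ∈ R`, `i ≠ j`).  Since the inverse of an elementary
matrix is again elementary, this subgroup coincides with the multiplicative
closure of the set of elementary matrices. -/
def IsElementary {ι : Type} [DecidableEq ι] [Fintype ι] {R : Type} [CommRing R]
    (M : Matrix ι ι R) : Prop :=
  M ∈ Submonoid.closure
    {A : Matrix ι ι R | ∃ (i j : ι) (r : R), i ≠ j ∧ A = 1 + Matrix.single i j r}

/-- A row `v` of length `n` is unimodular if its entries generate the unit ideal. -/
def IsUnimodular {R : Type} [CommRing R] {n : ℕ} (v : Fin n → R) : Prop :=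
  ∃ w : Fin n → R, ∑ i, v i * w i = 1

/-- Block diagonal sum `M ⊥ N`. -/
def oplus {R : Type} [CommRing R] {a b : ℕ} (M : Matrix (Fin a) (Fin a) R)
    (N : Matrix (Fin b) (Fin b) R) : Matrix (Fin (a + b)) (Fin (a + b)) R :=
  Matrix.reindex finSumFinEquiv finSumFinEquiv (Matrix.fromBlocks M 0 0 N)

/-- Reindexing a square matrix along an equality of sizes. -/
def matCast {R : Type} [CommRing R] {a b : ℕ} (h : a = b)
    (M : Matrix (Fin a) (Fin a) R) : Matrix (Fin b) (Fin b) R :=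
  Matrix.reindex (finCongr h) (finCongr h) M

/-- `ψ_m` : the block diagonal sum of copies of `[[0,1],[-1,0]]` (`m` even). -/
def psi (R : Type) [CommRing R] (m : ℕ) : Matrix (Fin m) (Fin m) R :=
  fun i j =>
    if (i : ℕ) + 1 = (j : ℕ) ∧ (i : ℕ) % 2 = 0 then 1
    else if (j : ℕ) + 1 = (i : ℕ) ∧ (j : ℕ) % 2 = 0 then -1
    else 0

/-- `σ_m` : the block diagonal sum of copies of `[[0,1],[1,0]]` (`m` even). -/
def sigmaMat (R : Type) [CommRing R] (m : ℕ) : Matrix (Fin m) (Fin m) R :=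
  fun i j =>
    if ((i : ℕ) + 1 = (j : ℕ) ∧ (i : ℕ) % 2 = 0) ∨
       ((j : ℕ) + 1 = (i : ℕ) ∧ (j : ℕ) % 2 = 0) then 1
    else 0

/-- The relation `∼` on invertible skew-symmetric matrices: for `G` of size
`2n = a` and `G'` of size `2m = b`, `G ∼ G'` iff there are `t ≥ 0` and an
elementary matrix `E ∈ E_{2(m+n+t)}(R)` with
`G ⊥ ψ_{2(m+t)} = Eᵗ (G' ⊥ ψ_{2(n+t)}) E`. -/
def WittEquiv {R : Type} [CommRing R] {a b : ℕ} (G : Matrix (Fin a) (Fin a) R)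
    (G' : Matrix (Fin b) (Fin b) R) : Prop :=
  ∃ (t : ℕ) (E : Matrix (Fin (a + (b + 2 * t))) (Fin (a + (b + 2 * t))) R),
    IsElementary E ∧
      oplus G (psi R (b + 2 * t)) =
        Eᵀ * matCast (by omega) (oplus G' (psi R (a + 2 * t))) * E

/-- The `4 × 4` invertible skew-symmetric matrix `V(v, w)` associated to a
unimodular row `v` with completion `w` (`v · wᵗ = 1`). -/
def VMat {R : Type} [CommRing R] (v w : Fin 3 → R) : Matrix (Fin 4) (Fin 4) R :=
  !![0, v 0, v 1, v 2;
     -(v 0), 0, w 2, -(w 1);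
     -(v 1), -(w 2), 0, w 0;
     -(v 2), w 1, -(w 0), 0]

/-- `n`-fold orthogonal (block diagonal) sum of a matrix with itself. -/
def oplusIter {R : Type} [CommRing R] {a : ℕ} (M : Matrix (Fin a) (Fin a) R) :
    (n : ℕ) → Matrix (Fin (n * a)) (Fin (n * a)) R
  | 0 => 0
  | n + 1 => matCast (by ring) (oplus M (oplusIter M n))

/-- The stabilization `diag(M, I_{n-d})` of a `d × d` matrix to an `n × n` matrix. -/
def stab {R : Type} [CommRing R] {d n : ℕ} (M : Matrix (Fin d) (Fin d) R) :
    Matrix (Fin n) (Fin n) R :=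
  fun i j =>
    if hi : (i : ℕ) < d then
      if hj : (j : ℕ) < d then M ⟨i, hi⟩ ⟨j, hj⟩ else 0
    else if (i : ℕ) = (j : ℕ) then 1 else 0

/-!
Put `C = h⁻¹g`. Congruence by `C` carries `hᵀf₁h` to `gᵀf₁g`, and congruence by
`σ(Cᵀ)⁻¹σ` carries `σ(hᵀf₀h)⁻¹σ` to `σ(gᵀf₀g)⁻¹σ`. The block matrix `diag(C, σ(Cᵀ)⁻¹σ)`
need not be elementary, but after stabilizing once by `ψ` we may also act on the `ψ`-block
by `diag(C⁻¹, Cᵀ)` in a hyperbolic basis, which preserves `ψ`. Up to a permutation of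
coordinates the total congruence is `diag(C, C⁻¹) ⊥ diag((Cᵀ)⁻¹, Cᵀ)`, elementary by
Whitehead's lemma, so the relation holds already with `t = 0`.
-/

section Elementary

variable {R : Type} [CommRing R] {ι κ : Type} [DecidableEq ι] [Fintype ι] [DecidableEq κ]
  [Fintype κ]

lemma isElementary_one_add_single {i j : ι} (hij : i ≠ j) (r : R) :
    IsElementary (1 + single i j r) :=
  Submonoid.subset_closure ⟨i, j, r, hij, rfl⟩

lemma IsElementary.mul {M N : Matrix ι ι R} (hM : IsElementary M) (hN : IsElementary N) :
    IsElementary (M * N) :=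
  Submonoid.mul_mem _ hM hN

lemma IsElementary.map (φ : Matrix ι ι R →* Matrix κ κ R)
    (hφ : ∀ i j : ι, i ≠ j → ∀ r : R, IsElementary (φ (1 + single i j r)))
    {M : Matrix ι ι R} (hM : IsElementary M) : IsElementary (φ M) := by
  induction hM using Submonoid.closure_induction with
  | mem x hx =>
    obtain ⟨i, j, r, hij, rfl⟩ := hx
    exact hφ i j hij r
  | one => rw [map_one]; exact Submonoid.one_mem _
  | mul x y _ _ hx hy => rw [map_mul]; exact hx.mul hy

lemma IsElementary.submatrix {M : Matrix ι ι R} (hM : IsElementary M) (e : κ ≃ ι) :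
    IsElementary (M.submatrix e e) := by
  let φ : Matrix ι ι R →* Matrix κ κ R :=
    { toFun := fun M => M.submatrix e e
      map_one' := submatrix_one_equiv e
      map_mul' := fun M N => (submatrix_mul_equiv M N e e e).symm }
  refine hM.map φ fun i j hij r => ?_
  simpa [φ, submatrix_add, submatrix_one_equiv] using
    isElementary_one_add_single (e.symm.injective.ne hij) r

lemma isElementary_fromBlocks_one_right {A : Matrix ι ι R} (hA : IsElementary A) :
    IsElementary (fromBlocks A 0 0 (1 : Matrix κ κ R)) := by
  let φ : Matrix ι ι R →* Matrix (ι ⊕ κ) (ι ⊕ κ) R :=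
    { toFun := fun A => fromBlocks A 0 0 1
      map_one' := fromBlocks_one
      map_mul' := fun A B => by simp [fromBlocks_multiply] }
  refine hA.map φ fun i j hij r => ?_
  convert isElementary_one_add_single (ι := ι ⊕ κ) (Sum.inl_injective.ne hij) r using 1
  ext (x | x) (y | y) <;> simp [φ, single, one_apply]

lemma isElementary_fromBlocks {A : Matrix ι ι R} {B : Matrix κ κ R} (hA : IsElementary A)
    (hB : IsElementary B) : IsElementary (fromBlocks A 0 0 B) := by
  have hsplit :
      fromBlocks A 0 0 B = fromBlocks A 0 0 1 * fromBlocks (1 : Matrix ι ι R) 0 0 B := by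
    simp [fromBlocks_multiply]
  have hswap : fromBlocks (1 : Matrix ι ι R) 0 0 B =
      (fromBlocks B 0 0 1).submatrix Sum.swap Sum.swap :=
    (fromBlocks_submatrix_sum_swap_sum_swap _ _ _ _).symm
  rw [hsplit, hswap]
  exact (isElementary_fromBlocks_one_right hA).mul
    ((isElementary_fromBlocks_one_right hB).submatrix (Equiv.sumComm ι κ))

lemma isElementary_fromBlocks_one_one (A : Matrix ι κ R) :
    IsElementary (fromBlocks 1 A 0 1) := by
  induction A using Matrix.induction_on' with
  | h_zero => rw [fromBlocks_one]; exact Submonoid.one_mem _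
  | h_add A B hA hB =>
    convert hA.mul hB using 1
    simp [fromBlocks_multiply, add_comm]
  | h_std_basis i j r =>
    convert isElementary_one_add_single (ι := ι ⊕ κ) (Sum.inl_ne_inr (a := i) (b := j)) r
      using 1
    ext (x | x) (y | y) <;> simp [single, one_apply]

lemma isElementary_fromBlocks_one_zero (A : Matrix κ ι R) :
    IsElementary (fromBlocks 1 0 A 1) := by
  rw [← fromBlocks_submatrix_sum_swap_sum_swap]
  exact (isElementary_fromBlocks_one_one A).submatrix (Equiv.sumComm ι κ)

lemma isElementary_fromBlocks_antidiag {X Y : Matrix ι ι R} (hXY : X * Y = 1) :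
    IsElementary (fromBlocks 0 X (-Y) 0) := by
  have hYX : Y * X = 1 := mul_eq_one_comm.mp hXY
  have : fromBlocks 0 X (-Y) 0 =
      fromBlocks 1 X 0 1 * fromBlocks 1 0 (-Y) 1 * fromBlocks 1 X 0 1 := by
    simp [fromBlocks_multiply, hXY, hYX]
  rw [this]
  exact ((isElementary_fromBlocks_one_one X).mul (isElementary_fromBlocks_one_zero (-Y))).mul
    (isElementary_fromBlocks_one_one X)

lemma isElementary_fromBlocks_of_mul_eq_one {X Y : Matrix ι ι R} (hXY : X * Y = 1) :
    IsElementary (fromBlocks X 0 0 Y) := by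
  have : fromBlocks X 0 0 Y = fromBlocks 0 X (-Y) 0 * fromBlocks 0 (-1) (-(-1)) 0 := by
    simp [fromBlocks_multiply]
  rw [this]
  exact (isElementary_fromBlocks_antidiag hXY).mul (isElementary_fromBlocks_antidiag (by simp))

end Elementary

section BlockMatrices

variable {R : Type} [CommRing R] {ι κ ν μ : Type} [DecidableEq ι] [Fintype ι] [DecidableEq κ]
  [Fintype κ] [DecidableEq ν] [Fintype ν] [DecidableEq μ] [Fintype μ]

lemma isElementary_fromBlocks_fromBlocks {A : Matrix ι ι R} {B : Matrix κ κ R}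
    {C : Matrix ν ν R} {D : Matrix μ μ R} (hAC : IsElementary (fromBlocks A 0 0 C))
    (hBD : IsElementary (fromBlocks B 0 0 D)) :
    IsElementary (fromBlocks (fromBlocks A 0 0 B) 0 0 (fromBlocks C 0 0 D)) := by
  have : fromBlocks (fromBlocks A 0 0 B) 0 0 (fromBlocks C 0 0 D) =
      (fromBlocks (fromBlocks A 0 0 C) 0 0 (fromBlocks B 0 0 D)).submatrix
        (Equiv.sumSumSumComm ι κ ν μ) (Equiv.sumSumSumComm ι κ ν μ) := by
    ext ((i | i) | (i | i)) ((j | j) | (j | j)) <;> simp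
  rw [this]
  exact (isElementary_fromBlocks hAC hBD).submatrix _

lemma isElementary_fromBlocks_inv_transpose {C : Matrix ι ι R} (hC : IsUnit C.det)
    (τ : Equiv.Perm ι) :
    IsElementary (fromBlocks (fromBlocks C 0 0 ((Cᵀ)⁻¹.submatrix τ τ)) 0 0
      (fromBlocks C⁻¹ 0 0 Cᵀ)) := by
  refine isElementary_fromBlocks_fromBlocks
    (isElementary_fromBlocks_of_mul_eq_one (mul_nonsing_inv C hC)) ?_
  have hCT : IsUnit Cᵀ.det := by rwa [det_transpose]
  convert (isElementary_fromBlocks_of_mul_eq_one (nonsing_inv_mul Cᵀ hCT)).submatrix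
    (τ.sumCongr (Equiv.refl ι)) using 1
  ext (i | i) (j | j) <;> simp

lemma fromBlocks_inv_transpose_mem_symplecticGroup {C : Matrix ι ι R} (hC : IsUnit C.det) :
    fromBlocks C⁻¹ 0 0 Cᵀ ∈ symplecticGroup ι R := by
  rw [SymplecticGroup.fromBlocks_mem_iff]
  simp [← transpose_mul, mul_nonsing_inv C hC]

end BlockMatrices

lemma fromBlocks_diag_transpose_mul_mul {R ι κ : Type} [CommRing R] [Fintype ι] [Fintype κ]
    (P A : Matrix ι ι R) (Q B : Matrix κ κ R) :
    (fromBlocks P 0 0 Q)ᵀ * fromBlocks A 0 0 B * fromBlocks P 0 0 Q =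
      fromBlocks (Pᵀ * A * P) 0 0 (Qᵀ * B * Q) := by
  simp [fromBlocks_transpose, fromBlocks_multiply]

section Congruence

variable {R : Type} [CommRing R] {ι : Type} [DecidableEq ι] [Fintype ι]

lemma transpose_mul_mul_inv_mul {h : Matrix ι ι R} (hh : IsUnit h.det) (g F : Matrix ι ι R) :
    (h⁻¹ * g)ᵀ * (hᵀ * F * h) * (h⁻¹ * g) = gᵀ * F * g := by
  have hhT : IsUnit hᵀ.det := by rwa [det_transpose]
  simp [transpose_nonsing_inv, Matrix.mul_assoc, nonsing_inv_mul_cancel_left _ _ hhT,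
    mul_nonsing_inv_cancel_left _ _ hh]

lemma transpose_mul_mul_conj_inv {S : Matrix ι ι R} (hS : S * S = 1) (hST : Sᵀ = S)
    (C A : Matrix ι ι R) :
    (S * (Cᵀ)⁻¹ * S)ᵀ * (S * A⁻¹ * S) * (S * (Cᵀ)⁻¹ * S) = S * (Cᵀ * A * C)⁻¹ * S := by
  have hS' : ∀ X, S * (S * X) = X := fun X => by
    rw [← Matrix.mul_assoc, hS, Matrix.one_mul]
  simp [transpose_nonsing_inv, hST, Matrix.mul_inv_rev, Matrix.mul_assoc, hS']

end Congruence

def pairSwap (n : ℕ) : Equiv.Perm (Fin (2 * n)) :=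
  Function.Involutive.toPerm
    (fun k => ⟨if (k : ℕ) % 2 = 0 then k + 1 else k - 1, by split_ifs <;> omega⟩)
    (fun k => by ext; simp only; split_ifs <;> omega)

lemma pairSwap_val {n : ℕ} (k : Fin (2 * n)) :
    (pairSwap n k : ℕ) = if (k : ℕ) % 2 = 0 then (k : ℕ) + 1 else (k : ℕ) - 1 :=
  rfl

lemma pairSwap_symm (n : ℕ) : (pairSwap n).symm = pairSwap n :=
  Function.Involutive.toPerm_symm _

def interleave (N : ℕ) : Fin N ⊕ Fin N ≃ Fin (N + N) where
  toFun := Sum.elim (fun i => ⟨2 * i, by omega⟩) (fun i => ⟨2 * i + 1, by omega⟩)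
  invFun k :=
    if (k : ℕ) % 2 = 0 then Sum.inl ⟨k / 2, by omega⟩ else Sum.inr ⟨k / 2, by omega⟩
  left_inv := by rintro (i | i) <;> simp [Nat.mul_add_div]
  right_inv k := by grind

section Sigma

variable {R : Type} [CommRing R] {n : ℕ}

lemma sigmaMat_eq_toMatrix : sigmaMat R (2 * n) = (pairSwap n).toPEquiv.toMatrix := by
  ext i j
  simp only [sigmaMat, PEquiv.toMatrix_apply, Equiv.toPEquiv_apply, Option.mem_def,
    Option.some_inj, Fin.ext_iff, pairSwap_val]
  split_ifs <;> first | rfl | omega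

lemma sigmaMat_mul_mul_sigmaMat (M : Matrix (Fin (2 * n)) (Fin (2 * n)) R) :
    sigmaMat R (2 * n) * M * sigmaMat R (2 * n) = M.submatrix (pairSwap n) (pairSwap n) := by
  rw [sigmaMat_eq_toMatrix, PEquiv.toMatrix_toPEquiv_mul, PEquiv.mul_toMatrix_toPEquiv,
    pairSwap_symm]
  rfl

lemma sigmaMat_mul_self : sigmaMat R (2 * n) * sigmaMat R (2 * n) = 1 := by
  simpa using sigmaMat_mul_mul_sigmaMat (R := R) (1 : Matrix (Fin (2 * n)) (Fin (2 * n)) R)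

lemma sigmaMat_transpose : (sigmaMat R (2 * n))ᵀ = sigmaMat R (2 * n) := by
  ext i j
  simp only [transpose_apply, sigmaMat, or_comm]

end Sigma

section Transport

variable {R : Type} [CommRing R]

lemma psi_submatrix_interleave (N : ℕ) :
    (psi R (N + N)).submatrix (interleave N) (interleave N) = -J (Fin N) R := by
  have hodd : ∀ a b : ℕ, 2 * a + 1 ≠ 2 * b := by omega
  ext (i | i) (j | j) <;>
    simp [psi, J, interleave, one_apply, Fin.ext_iff, eq_comm, neg_ite, hodd, (hodd _ _).symm]

lemma oplus_submatrix_finSumFinEquiv {a b : ℕ} (P : Matrix (Fin a) (Fin a) R)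
    (Q : Matrix (Fin b) (Fin b) R) :
    (oplus P Q).submatrix finSumFinEquiv finSumFinEquiv = fromBlocks P 0 0 Q := by
  simp [oplus, reindex_apply]

lemma oplus_submatrix_sumCongr {a b : ℕ} {κ ν : Type} (u : κ ≃ Fin a) (v : ν ≃ Fin b)
    (P : Matrix (Fin a) (Fin a) R) (Q : Matrix (Fin b) (Fin b) R) :
    (oplus P Q).submatrix ((u.sumCongr v).trans finSumFinEquiv)
        ((u.sumCongr v).trans finSumFinEquiv) =
      fromBlocks (P.submatrix u u) 0 0 (Q.submatrix v v) := by
  ext (i | i) (j | j) <;> simp [oplus, reindex_apply]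

end Transport

section Witt

variable {R : Type} [CommRing R]

-- Take `t = 0`: the `matCast` in `WittEquiv` is then definitionally the identity.
lemma wittEquiv_of_congr {a : ℕ} {G G' : Matrix (Fin a) (Fin a) R}
    {E : Matrix (Fin (a + a)) (Fin (a + a)) R} (hE : IsElementary E)
    (h : oplus G (psi R a) = Eᵀ * oplus G' (psi R a) * E) : WittEquiv G G' :=
  ⟨0, E, hE, h⟩

lemma wittEquiv_oplus_of_congr {N : ℕ} {A B A' B' : Matrix (Fin N) (Fin N) R}
    {E : Matrix ((Fin N ⊕ Fin N) ⊕ (Fin N ⊕ Fin N)) ((Fin N ⊕ Fin N) ⊕ (Fin N ⊕ Fin N)) R}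
    (hE : IsElementary E)
    (h : fromBlocks (fromBlocks A 0 0 B) 0 0 (-J (Fin N) R) =
      Eᵀ * fromBlocks (fromBlocks A' 0 0 B') 0 0 (-J (Fin N) R) * E) :
    WittEquiv (oplus A B) (oplus A' B') := by
  let θ := ((finSumFinEquiv (m := N) (n := N)).sumCongr (interleave N)).trans finSumFinEquiv
  have hθ : ∀ P Q : Matrix (Fin N) (Fin N) R,
      (oplus (oplus P Q) (psi R (N + N))).submatrix θ θ =
        fromBlocks (fromBlocks P 0 0 Q) 0 0 (-J (Fin N) R) := fun P Q => by
    rw [← psi_submatrix_interleave, ← oplus_submatrix_finSumFinEquiv P Q,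
      ← oplus_submatrix_sumCongr]
  have hθ' : ∀ M : Matrix (Fin (N + N + (N + N))) (Fin (N + N + (N + N))) R,
      M = (M.submatrix θ θ).submatrix θ.symm θ.symm := fun M => by simp
  refine wittEquiv_of_congr (hE.submatrix θ.symm) ?_
  rw [hθ' (oplus (oplus A B) _), hθ' (oplus (oplus A' B') _), hθ, hθ, h, transpose_submatrix,
    submatrix_mul_equiv, submatrix_mul_equiv]

end Witt

theorem witt_class_independent_of_g_general
    (R : Type) [CommRing R] (n : ℕ)
    (f₀ f₁ g h : Matrix (Fin (2 * n)) (Fin (2 * n)) R)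
    (hg : IsUnit g.det) (hh : IsUnit h.det) :
    WittEquiv
      (oplus (gᵀ * f₁ * g)
        (sigmaMat R (2 * n) * (gᵀ * f₀ * g)⁻¹ * sigmaMat R (2 * n)))
      (oplus (hᵀ * f₁ * h)
        (sigmaMat R (2 * n) * (hᵀ * f₀ * h)⁻¹ * sigmaMat R (2 * n))) := by
  set σ := sigmaMat R (2 * n)
  set C := h⁻¹ * g
  have hC : IsUnit C.det := by
    rw [det_mul]
    exact (isUnit_nonsing_inv_det h hh).mul hg
  have hCongr : ∀ F, Cᵀ * (hᵀ * F * h) * C = gᵀ * F * g := transpose_mul_mul_inv_mul hh g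
  have hD := SymplecticGroup.mem_iff'.mp (fromBlocks_inv_transpose_mem_symplecticGroup hC)
  refine wittEquiv_oplus_of_congr
    (E := fromBlocks (fromBlocks C 0 0 (σ * (Cᵀ)⁻¹ * σ)) 0 0 (fromBlocks C⁻¹ 0 0 Cᵀ)) ?_ ?_
  · rw [sigmaMat_mul_mul_sigmaMat]
    exact isElementary_fromBlocks_inv_transpose hC _
  · rw [fromBlocks_diag_transpose_mul_mul, fromBlocks_diag_transpose_mul_mul,
      transpose_mul_mul_conj_inv sigmaMat_mul_self sigmaMat_transpose, hCongr, hCongr,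
      Matrix.mul_neg, Matrix.neg_mul, hD]

/-- Lemma `invariant`. The class of
`(gᵗf₁g) ⊥ σ_{2n}(gᵗf₀g)⁻¹σ_{2n}` under `∼` does not depend on the choice of
the invertible matrix `g`. -/
theorem witt_class_independent_of_g
    (R : Type) [CommRing R] (h2 : IsUnit (2 : R)) (n : ℕ)
    (f₀ f₁ g h : Matrix (Fin (2 * n)) (Fin (2 * n)) R)
    (hf₀skew : f₀ᵀ = -f₀) (hf₁skew : f₁ᵀ = -f₁)
    (hf₀ : IsUnit f₀.det) (hf₁ : IsUnit f₁.det)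
    (hg : IsUnit g.det) (hh : IsUnit h.det) :
    WittEquiv
      (oplus (gᵀ * f₁ * g)
        (sigmaMat R (2 * n) * (gᵀ * f₀ * g)⁻¹ * sigmaMat R (2 * n)))
      (oplus (hᵀ * f₁ * h)
        (sigmaMat R (2 * n) * (hᵀ * f₀ * h)⁻¹ * sigmaMat R (2 * n))) :=
  witt_class_independent_of_g_general R n f₀ f₁ g h hg hh
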